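/- On-shell closedness in the matrix case: if the matrix fields G_{ab}(x_i,x_j,x_k,x_l) satisfy the matrix Darboux system ∂_a G_{bc} = G_{ac} J_a G_{ba} for all pairwise distinct a,b,c ∈ {i,j,k,l}, with pairwise commuting constant matrices J_a, then the alternating sum ∂_l 𝓛_{ijk} − ∂_k 𝓛_{ijl} + ∂_j 𝓛_{ikl} − ∂_i 𝓛_{jkl} vanishes identically, where 𝓛_{ijk} = ½ tr{G_{ij}J_i(∂_kG_{ji})J_j − (∂_kG_{ij})J_iG_{ji}J_j + cycl.(ijk)} − tr{G_{ij}J_iG_{ki}J_kG_{jk}J_j − G_{ji}J_jG_{kj}J_kG_{ik}J_i}. -/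

import Mathlib

/-- Scalar partial derivative in the `a`-th coordinate direction. -/
noncomputable def pd (a : Fin 4) (f : (Fin 4 → ℝ) → ℝ) (x : Fin 4 → ℝ) : ℝ :=
  fderiv ℝ f x (Pi.single a 1)

/-- Entrywise partial derivative of a matrix-valued field. -/
noncomputable def pdM {N : ℕ} (a : Fin 4)
    (F : (Fin 4 → ℝ) → Matrix (Fin N) (Fin N) ℝ) (x : Fin 4 → ℝ) :
    Matrix (Fin N) (Fin N) ℝ :=
  Matrix.of fun α β => fderiv ℝ (fun y => F y α β) x (Pi.single a 1)

/-- `Γ_{i;j,k} = ∂_i G_{jk} − G_{ik} J_i G_{ji}`. -/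
noncomputable def GamM {N : ℕ}
    (G : Fin 4 → Fin 4 → (Fin 4 → ℝ) → Matrix (Fin N) (Fin N) ℝ)
    (J : Fin 4 → Matrix (Fin N) (Fin N) ℝ)
    (i j k : Fin 4) (x : Fin 4 → ℝ) : Matrix (Fin N) (Fin N) ℝ :=
  pdM i (G j k) x - G i k x * J i * G j i x

/-- The matrix Darboux Lagrangian `𝓛_{ijk}`. -/
noncomputable def LagM {N : ℕ}
    (G : Fin 4 → Fin 4 → (Fin 4 → ℝ) → Matrix (Fin N) (Fin N) ℝ)
    (J : Fin 4 → Matrix (Fin N) (Fin N) ℝ)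
    (i j k : Fin 4) (x : Fin 4 → ℝ) : ℝ :=
  (1/2) * Matrix.trace
    (G i j x * J i * pdM k (G j i) x * J j - pdM k (G i j) x * J i * G j i x * J j
      + G j k x * J j * pdM i (G k j) x * J k - pdM i (G j k) x * J j * G k j x * J k
      + G k i x * J k * pdM j (G i k) x * J i - pdM j (G k i) x * J k * G i k x * J i)
  - Matrix.trace
    (G i j x * J i * G k i x * J k * G j k x * J j
      - G j i x * J j * G k j x * J k * G i k x * J i)

/-- The coefficient of the 4-form `d𝖫`:
`𝒜_{ijkl} = ∂_l 𝓛_{ijk} − ∂_k 𝓛_{ijl} + ∂_j 𝓛_{ikl} − ∂_i 𝓛_{jkl}`. -/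
noncomputable def Acoef {N : ℕ}
    (G : Fin 4 → Fin 4 → (Fin 4 → ℝ) → Matrix (Fin N) (Fin N) ℝ)
    (J : Fin 4 → Matrix (Fin N) (Fin N) ℝ)
    (i j k l : Fin 4) (x : Fin 4 → ℝ) : ℝ :=
  pd l (LagM G J i j k) x - pd k (LagM G J i j l) x
    + pd j (LagM G J i k l) x - pd i (LagM G J j k l) x

/-- The six-term block of the double-zero expansion. -/
noncomputable def Blk {N : ℕ}
    (G : Fin 4 → Fin 4 → (Fin 4 → ℝ) → Matrix (Fin N) (Fin N) ℝ)
    (J : Fin 4 → Matrix (Fin N) (Fin N) ℝ)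
    (i j k l : Fin 4) (x : Fin 4 → ℝ) : ℝ :=
  Matrix.trace
    (GamM G J l i j x * J i * GamM G J k j i x * J j
      - GamM G J k i j x * J i * GamM G J l j i x * J j
      + GamM G J l k i x * J k * GamM G J j i k x * J i
      - GamM G J j k i x * J k * GamM G J l i k x * J i
      + GamM G J l j k x * J j * GamM G J i k j x * J k
      - GamM G J i j k x * J j * GamM G J l k j x * J k)



section DZaux

open Matrix

variable {N : ℕ} {a : Fin 4} {x : Fin 4 → ℝ}

/-- Matrix-valued fields. -/
abbrev MFd (N : ℕ) := (Fin 4 → ℝ) → Matrix (Fin N) (Fin N) ℝ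

/-- Entrywise differentiability at a point. -/
def EDiff (F : MFd N) (x : Fin 4 → ℝ) : Prop :=
  ∀ α β, DifferentiableAt ℝ (fun y => F y α β) x

lemma EDiff.mul {F H : MFd N} (hF : EDiff F x) (hH : EDiff H x) :
    EDiff (fun y => F y * H y) x := by
  intro α β
  simp only [Matrix.mul_apply]
  exact DifferentiableAt.fun_sum fun γ _ => (hF α γ).mul (hH γ β)

lemma EDiff.mul_const {F : MFd N} (hF : EDiff F x) (C : Matrix (Fin N) (Fin N) ℝ) :
    EDiff (fun y => F y * C) x := by
  intro α β
  simp only [Matrix.mul_apply]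
  exact DifferentiableAt.fun_sum fun γ _ => (hF α γ).mul_const _

lemma ediff_trace {F : MFd N} (hF : EDiff F x) :
    DifferentiableAt ℝ (fun y => (F y).trace) x := by
  simp only [Matrix.trace, Matrix.diag]
  exact DifferentiableAt.fun_sum fun i _ => hF i i

lemma pd_trace {F : MFd N} (hF : EDiff F x) :
    pd a (fun y => (F y).trace) x = (pdM a F x).trace := by
  simp only [pd, pdM, Matrix.trace, Matrix.diag, Matrix.of_apply]
  rw [fderiv_fun_sum (fun i _ => hF i i)]
  simp

lemma pd_const_mul (c : ℝ) {f : (Fin 4 → ℝ) → ℝ} (hf : DifferentiableAt ℝ f x) :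
    pd a (fun y => c * f y) x = c * pd a f x := by
  simp [pd, fderiv_const_mul hf]

lemma pd_sub {f g : (Fin 4 → ℝ) → ℝ} (hf : DifferentiableAt ℝ f x)
    (hg : DifferentiableAt ℝ g x) :
    pd a (fun y => f y - g y) x = pd a f x - pd a g x := by
  simp [pd, fderiv_fun_sub hf hg]

lemma pdM_mul {F H : MFd N} (hF : EDiff F x) (hH : EDiff H x) :
    pdM a (fun y => F y * H y) x = pdM a F x * H x + F x * pdM a H x := by
  ext α β
  simp only [pdM, Matrix.of_apply, Matrix.add_apply, Matrix.mul_apply]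
  rw [fderiv_fun_sum (fun γ _ => (hF α γ).fun_mul (hH γ β))]
  rw [ContinuousLinearMap.sum_apply]
  rw [← Finset.sum_add_distrib]
  refine Finset.sum_congr rfl fun γ _ => ?_
  rw [fderiv_fun_mul (hF α γ) (hH γ β)]
  simp only [ContinuousLinearMap.add_apply, ContinuousLinearMap.smul_apply, smul_eq_mul]
  ring

lemma pdM_mul_const {F : MFd N} (hF : EDiff F x) (C : Matrix (Fin N) (Fin N) ℝ) :
    pdM a (fun y => F y * C) x = pdM a F x * C := by
  ext α β
  simp only [pdM, Matrix.of_apply, Matrix.mul_apply]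
  rw [fderiv_fun_sum (fun γ _ => (hF α γ).mul_const _)]
  rw [ContinuousLinearMap.sum_apply]
  refine Finset.sum_congr rfl fun γ _ => ?_
  rw [fderiv_mul_const (hF α γ)]
  simp [mul_comm]

lemma rot6 (a1 a2 a3 a4 a5 a6 : Matrix (Fin N) (Fin N) ℝ) :
    (a1*(a2*(a3*(a4*(a5*a6))))).trace = (a2*(a3*(a4*(a5*(a6*a1))))).trace := by
  rw [Matrix.trace_mul_comm]
  simp only [mul_assoc]

lemma rot8 (a1 a2 a3 a4 a5 a6 a7 a8 : Matrix (Fin N) (Fin N) ℝ) :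
    (a1*(a2*(a3*(a4*(a5*(a6*(a7*a8))))))).trace
      = (a2*(a3*(a4*(a5*(a6*(a7*(a8*a1))))))).trace := by
  rw [Matrix.trace_mul_comm]
  simp only [mul_assoc]

/-- On shell, the Lagrangian collapses to `(1/2)(tr P − tr Q)`. -/
lemma lag_reduce (G : Fin 4 → Fin 4 → MFd N)
    (J : Fin 4 → Matrix (Fin N) (Fin N) ℝ)
    (hsys : ∀ a b c : Fin 4, a ≠ b → a ≠ c → b ≠ c →
      ∀ x, pdM a (G b c) x = G a c x * J a * G b a x)
    (a b c : Fin 4) (hab : a ≠ b) (hac : a ≠ c) (hbc : b ≠ c) (x : Fin 4 → ℝ) :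
    LagM G J a b c x
      = (1/2) * ((G a b x * J a * G c a x * J c * G b c x * J b).trace
          - (G b a x * J b * G c b x * J c * G a c x * J a).trace) := by
  unfold LagM
  rw [hsys c b a hbc.symm hac.symm hab.symm x]
  rw [hsys c a b hac.symm hbc.symm hab x]
  rw [hsys a c b hac hab hbc.symm x]
  rw [hsys a b c hab hac hbc x]
  rw [hsys b a c hab.symm hbc hac x]
  rw [hsys b c a hbc hab.symm hac.symm x]
  simp only [Matrix.trace_sub, Matrix.trace_add, mul_assoc]
  rw [rot6 (G a c x) (J a) (G b a x) (J b) (G c b x) (J c)]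
  rw [rot6 (G b c x) (J b) (G a b x) (J a) (G c a x) (J c)]
  rw [rot6 (G c a x) (J c) (G b c x) (J b) (G a b x) (J a)]
  rw [rot6 (G c b x) (J c) (G a c x) (J a) (G b a x) (J b)]
  rw [rot6 (J a) (G b a x) (J b) (G c b x) (J c) (G a c x)]
  rw [rot6 (J b) (G a b x) (J a) (G c a x) (J c) (G b c x)]
  rw [rot6 (J c) (G a c x) (J a) (G b a x) (J b) (G c b x)]
  rw [rot6 (G a c x) (J a) (G b a x) (J b) (G c b x) (J c)]
  rw [rot6 (J a) (G b a x) (J b) (G c b x) (J c) (G a c x)]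
  rw [rot6 (J c) (G b c x) (J b) (G a b x) (J a) (G c a x)]
  rw [rot6 (G b c x) (J b) (G a b x) (J a) (G c a x) (J c)]
  rw [rot6 (J b) (G a b x) (J a) (G c a x) (J c) (G b c x)]
  ring

/-- Derivative of the reduced Lagrangian trace, with the system substituted. -/
lemma pd_tr6 (A B C : MFd N) (J1 J2 J3 : Matrix (Fin N) (Fin N) ℝ)
    (hA : EDiff A x) (hB : EDiff B x) (hC : EDiff C x) :
    pd a (fun y => (A y * J1 * B y * J2 * C y * J3).trace) x
      = (pdM a A x * J1 * B x * J2 * C x * J3).trace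
        + (A x * J1 * pdM a B x * J2 * C x * J3).trace
        + (A x * J1 * B x * J2 * pdM a C x * J3).trace := by
  have e1 : EDiff (fun y => A y * J1) x := hA.mul_const J1
  have e2 : EDiff (fun y => A y * J1 * B y) x := e1.mul hB
  have e3 : EDiff (fun y => A y * J1 * B y * J2) x := e2.mul_const J2
  have e4 : EDiff (fun y => A y * J1 * B y * J2 * C y) x := e3.mul hC
  have e5 : EDiff (fun y => A y * J1 * B y * J2 * C y * J3) x := e4.mul_const J3
  rw [pd_trace e5]
  rw [pdM_mul_const e4 J3]
  rw [pdM_mul e3 hC]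
  rw [pdM_mul_const e2 J2]
  rw [pdM_mul e1 hB]
  rw [pdM_mul_const hA J1]
  simp only [Matrix.add_mul, Matrix.trace_add]

/-- The key derivative formula for the on-shell Lagrangian. -/
lemma key_pd (G : Fin 4 → Fin 4 → MFd N)
    (J : Fin 4 → Matrix (Fin N) (Fin N) ℝ)
    (hsmooth : ∀ a b : Fin 4, a ≠ b → ∀ α β, ContDiff ℝ (⊤ : ℕ∞) (fun y => G a b y α β))
    (hsys : ∀ a b c : Fin 4, a ≠ b → a ≠ c → b ≠ c →
      ∀ x, pdM a (G b c) x = G a c x * J a * G b a x)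
    (a b c d : Fin 4) (hab : a ≠ b) (hac : a ≠ c) (had : a ≠ d)
    (hbc : b ≠ c) (hbd : b ≠ d) (hcd : c ≠ d) (x : Fin 4 → ℝ) :
    pd d (LagM G J a b c) x
      = (1/2) * ((G d b x * J d * G a d x * J a * G c a x * J c * G b c x * J b).trace
          + (G a b x * J a * (G d a x * J d * G c d x) * J c * G b c x * J b).trace
          + (G a b x * J a * G c a x * J c * (G d c x * J d * G b d x) * J b).trace
          - ((G d a x * J d * G b d x * J b * G c b x * J c * G a c x * J a).trace
            + (G b a x * J b * (G d b x * J d * G c d x) * J c * G a c x * J a).trace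
            + (G b a x * J b * G c b x * J c * (G d c x * J d * G a d x) * J a).trace)) := by
  have hd : ∀ p q : Fin 4, p ≠ q → EDiff (G p q) x := fun p q hpq α β =>
    ((hsmooth p q hpq α β).differentiable (by simp)).differentiableAt
  have hL : LagM G J a b c
      = fun y => (1/2) * ((G a b y * J a * G c a y * J c * G b c y * J b).trace
          - (G b a y * J b * G c b y * J c * G a c y * J a).trace) :=
    funext fun y => lag_reduce G J hsys a b c hab hac hbc y
  rw [hL]
  have hP : EDiff (fun y => G a b y * J a * G c a y * J c * G b c y * J b) x :=
    ((((hd a b hab).mul_const (J a)).mul (hd c a hac.symm)).mul_const (J c)).mul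
      (hd b c hbc) |>.mul_const (J b)
  have hQ : EDiff (fun y => G b a y * J b * G c b y * J c * G a c y * J a) x :=
    ((((hd b a hab.symm).mul_const (J b)).mul (hd c b hbc.symm)).mul_const (J c)).mul
      (hd a c hac) |>.mul_const (J a)
  rw [pd_const_mul _ ((ediff_trace hP).fun_sub (ediff_trace hQ))]
  rw [pd_sub (ediff_trace hP) (ediff_trace hQ)]
  rw [pd_tr6 (G a b) (G c a) (G b c) (J a) (J c) (J b)
    (hd a b hab) (hd c a hac.symm) (hd b c hbc)]
  rw [pd_tr6 (G b a) (G c b) (G a c) (J b) (J c) (J a)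
    (hd b a hab.symm) (hd c b hbc.symm) (hd a c hac)]
  rw [hsys d a b had.symm hbd.symm hab x, hsys d c a hcd.symm had.symm hac.symm x,
    hsys d b c hbd.symm hcd.symm hbc x, hsys d b a hbd.symm had.symm hab.symm x,
    hsys d c b hcd.symm hbd.symm hbc.symm x, hsys d a c had.symm hcd.symm hac x]

end DZaux

/-- on-shell closedness of the matrix Darboux Lagrangian 3-form. -/
theorem matrix_darboux_closed_on_shell {N : ℕ}
    (G : Fin 4 → Fin 4 → (Fin 4 → ℝ) → Matrix (Fin N) (Fin N) ℝ)
    (J : Fin 4 → Matrix (Fin N) (Fin N) ℝ)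
    (hJ : ∀ a b, J a * J b = J b * J a)
    (hsmooth : ∀ a b, a ≠ b → ∀ α β, ContDiff ℝ (⊤ : ℕ∞) (fun y => G a b y α β))
    (hsys : ∀ a b c : Fin 4, a ≠ b → a ≠ c → b ≠ c →
      ∀ x, pdM a (G b c) x = G a c x * J a * G b a x)
    (i j k l : Fin 4)
    (hij : i ≠ j) (hik : i ≠ k) (hil : i ≠ l)
    (hjk : j ≠ k) (hjl : j ≠ l) (hkl : k ≠ l) :
    ∀ x : Fin 4 → ℝ,
      pd l (LagM G J i j k) x - pd k (LagM G J i j l) x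
        + pd j (LagM G J i k l) x - pd i (LagM G J j k l) x = 0 := by
  intro x
  rw [key_pd G J hsmooth hsys i j k l hij hik hil hjk hjl hkl x]
  rw [key_pd G J hsmooth hsys i j l k hij hil hik hjl hjk hkl.symm x]
  rw [key_pd G J hsmooth hsys i k l j hik hil hij hkl hjk.symm hjl.symm x]
  rw [key_pd G J hsmooth hsys j k l i hjk hjl hij.symm hkl hik.symm hil.symm x]
  simp only [mul_assoc]
  rw [rot8 (G j i x) (J j) (G k j x) (J k) (G l k x) (J l) (G i l x) (J i)]
  rw [rot8 (G j i x) (J j) (G l j x) (J l) (G k l x) (J k) (G i k x) (J i)]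
  rw [rot8 (G j k x) (J j) (G i j x) (J i) (G l i x) (J l) (G k l x) (J k)]
  rw [rot8 (G j k x) (J j) (G l j x) (J l) (G i l x) (J i) (G k i x) (J k)]
  rw [rot8 (G k i x) (J k) (G j k x) (J j) (G l j x) (J l) (G i l x) (J i)]
  rw [rot8 (G k i x) (J k) (G l k x) (J l) (G j l x) (J j) (G i j x) (J i)]
  rw [rot8 (G k j x) (J k) (G i k x) (J i) (G l i x) (J l) (G j l x) (J j)]
  rw [rot8 (G k j x) (J k) (G l k x) (J l) (G i l x) (J i) (G j i x) (J j)]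
  rw [rot8 (G l i x) (J l) (G j l x) (J j) (G k j x) (J k) (G i k x) (J i)]
  rw [rot8 (G l j x) (J l) (G i l x) (J i) (G k i x) (J k) (G j k x) (J j)]
  rw [rot8 (J j) (G i j x) (J i) (G l i x) (J l) (G k l x) (J k) (G j k x)]
  rw [rot8 (J j) (G k j x) (J k) (G l k x) (J l) (G i l x) (J i) (G j i x)]
  rw [rot8 (G k j x) (J k) (G l k x) (J l) (G i l x) (J i) (G j i x) (J j)]
  rw [rot8 (J j) (G l j x) (J l) (G i l x) (J i) (G k i x) (J k) (G j k x)]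
  rw [rot8 (G l j x) (J l) (G i l x) (J i) (G k i x) (J k) (G j k x) (J j)]
  rw [rot8 (J j) (G l j x) (J l) (G k l x) (J k) (G i k x) (J i) (G j i x)]
  rw [rot8 (G l j x) (J l) (G k l x) (J k) (G i k x) (J i) (G j i x) (J j)]
  rw [rot8 (J k) (G i k x) (J i) (G l i x) (J l) (G j l x) (J j) (G k j x)]
  rw [rot8 (J k) (G j k x) (J j) (G l j x) (J l) (G i l x) (J i) (G k i x)]
  rw [rot8 (G j k x) (J j) (G l j x) (J l) (G i l x) (J i) (G k i x) (J k)]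
  rw [rot8 (J j) (G l j x) (J l) (G i l x) (J i) (G k i x) (J k) (G j k x)]
  rw [rot8 (G l j x) (J l) (G i l x) (J i) (G k i x) (J k) (G j k x) (J j)]
  rw [rot8 (J k) (G l k x) (J l) (G i l x) (J i) (G j i x) (J j) (G k j x)]
  rw [rot8 (G l k x) (J l) (G i l x) (J i) (G j i x) (J j) (G k j x) (J k)]
  rw [rot8 (J k) (G l k x) (J l) (G j l x) (J j) (G i j x) (J i) (G k i x)]
  rw [rot8 (G l k x) (J l) (G j l x) (J j) (G i j x) (J i) (G k i x) (J k)]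
  rw [rot8 (J l) (G i l x) (J i) (G j i x) (J j) (G k j x) (J k) (G l k x)]
  rw [rot8 (J l) (G i l x) (J i) (G k i x) (J k) (G j k x) (J j) (G l j x)]
  rw [rot8 (J l) (G j l x) (J j) (G i j x) (J i) (G k i x) (J k) (G l k x)]
  rw [rot8 (G j l x) (J j) (G i j x) (J i) (G k i x) (J k) (G l k x) (J l)]
  rw [rot8 (J j) (G i j x) (J i) (G k i x) (J k) (G l k x) (J l) (G j l x)]
  rw [rot8 (J l) (G j l x) (J j) (G k j x) (J k) (G i k x) (J i) (G l i x)]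
  rw [rot8 (G j l x) (J j) (G k j x) (J k) (G i k x) (J i) (G l i x) (J l)]
  rw [rot8 (J j) (G k j x) (J k) (G i k x) (J i) (G l i x) (J l) (G j l x)]
  rw [rot8 (G k j x) (J k) (G i k x) (J i) (G l i x) (J l) (G j l x) (J j)]
  rw [rot8 (J k) (G i k x) (J i) (G l i x) (J l) (G j l x) (J j) (G k j x)]
  rw [rot8 (J l) (G k l x) (J k) (G i k x) (J i) (G j i x) (J j) (G l j x)]
  rw [rot8 (G k l x) (J k) (G i k x) (J i) (G j i x) (J j) (G l j x) (J l)]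
  rw [rot8 (J k) (G i k x) (J i) (G j i x) (J j) (G l j x) (J l) (G k l x)]
  ring
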